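/- Let τ > 0 and define u : ℝ² → ℝ by u(x,y) = −τxy and v : ℝ² → ℝ by v(x,y) = (1/(4τ²) + x²)^(1/2). Then v_x² + v_y² < 1 everywhere and u and v satisfy the twin relations u_x = v_y/ω̃ − τy and u_y = −v_x/ω̃ + τx on ℝ², where ω̃ = (1 − v_x² − v_y²)^(1/2); consequently v satisfies the spacelike constant-mean-curvature-τ equation (1−v_y²)v_xx + 2 v_x v_y v_xy + (1−v_x²)v_yy = 2τ ω̃³ on ℝ². -/

import Mathlib

/-!
The hyperbolic cylinder `v = √(c + x²)`, `c = 1/(4τ²)`, depends on `x` only, with `v_x = x / v`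
and `v_xx = c / v³`. Hence `1 - v_x² = c / v²`, i.e. `ω̃ = 1 / (2τv)` for `τ > 0`, and every
claim becomes an algebraic identity in `x` and `v` modulo `4τ²v² = 1 + 4τ²x²`: for instance
`v_xx = c / v³ = 2τ ω̃³`, and `-v_x / ω̃ + τx = -2τx + τx = u_y`.
-/

open Real

/-- Partial derivative in the `x` direction. -/
noncomputable def px (f : ℝ × ℝ → ℝ) (p : ℝ × ℝ) : ℝ := fderiv ℝ f p (1, 0)

/-- Partial derivative in the `y` direction. -/
noncomputable def py (f : ℝ × ℝ → ℝ) (p : ℝ × ℝ) : ℝ := fderiv ℝ f p (0, 1)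

/-- Lorentzian area element `ω̃ = (1 − v_x² − v_y²)^(1/2)` of the graph of `v`. -/
noncomputable def omegT (v : ℝ × ℝ → ℝ) (p : ℝ × ℝ) : ℝ :=
  Real.sqrt (1 - (px v p) ^ 2 - (py v p) ^ 2)

/-- The invariant minimal graph `u(x,y) = −τxy` in `Nil₃(τ)`. -/
noncomputable def invGraph (τ : ℝ) : ℝ × ℝ → ℝ := fun p => -τ * p.1 * p.2

/-- The hyperbolic cylinder `v(x,y) = (1/(4τ²) + x²)^(1/2)` in `𝕃³`. -/
noncomputable def hypCylinder (τ : ℝ) : ℝ × ℝ → ℝ :=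
  fun p => Real.sqrt (1 / (4 * τ ^ 2) + p.1 ^ 2)

lemma hasFDerivAt_comp_fst {φ : ℝ → ℝ} {d : ℝ} {p : ℝ × ℝ} (h : HasDerivAt φ d p.1) :
    HasFDerivAt (fun q : ℝ × ℝ => φ q.1) (d • ContinuousLinearMap.fst ℝ ℝ ℝ) p :=
  h.comp_hasFDerivAt p hasFDerivAt_fst

lemma px_comp_fst {φ : ℝ → ℝ} {d : ℝ} {p : ℝ × ℝ} (h : HasDerivAt φ d p.1) :
    px (fun q => φ q.1) p = d := by
  simp [px, (hasFDerivAt_comp_fst h).fderiv]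

lemma py_comp_fst {φ : ℝ → ℝ} {p : ℝ × ℝ} (h : DifferentiableAt ℝ φ p.1) :
    py (fun q => φ q.1) p = 0 := by
  simp [py, (hasFDerivAt_comp_fst h.hasDerivAt).fderiv]

lemma hasDerivAt_sqrt_const_add_sq {c : ℝ} (hc : 0 < c) (t : ℝ) :
    HasDerivAt (fun s => √(c + s ^ 2)) (t / √(c + t ^ 2)) t := by
  have hpos : 0 < c + t ^ 2 := by positivity
  have hsq : HasDerivAt (fun s => c + s ^ 2) (2 * t) t := by
    simpa using (hasDerivAt_pow 2 t).const_add c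
  refine ((hasDerivAt_sqrt hpos.ne').comp t hsq).congr_deriv ?_
  field_simp

lemma hasDerivAt_div_sqrt_const_add_sq {c : ℝ} (hc : 0 < c) (t : ℝ) :
    HasDerivAt (fun s => s / √(c + s ^ 2)) (c / √(c + t ^ 2) ^ 3) t := by
  have hpos : 0 < c + t ^ 2 := by positivity
  have hsq : √(c + t ^ 2) ^ 2 = c + t ^ 2 := sq_sqrt hpos.le
  refine ((hasDerivAt_id t).div (hasDerivAt_sqrt_const_add_sq hc t)
    (sqrt_pos.mpr hpos).ne').congr_deriv ?_
  field_simp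
  simp only [id]
  linear_combination hsq

lemma hasFDerivAt_invGraph (τ : ℝ) (p : ℝ × ℝ) :
    HasFDerivAt (invGraph τ)
      ((-τ * p.1) • ContinuousLinearMap.snd ℝ ℝ ℝ
        + p.2 • (-τ) • ContinuousLinearMap.fst ℝ ℝ ℝ) p :=
  (hasFDerivAt_fst.const_mul (-τ)).mul hasFDerivAt_snd

lemma px_invGraph (τ : ℝ) (p : ℝ × ℝ) : px (invGraph τ) p = -τ * p.2 := by
  simp [px, (hasFDerivAt_invGraph τ p).fderiv, mul_comm]

lemma py_invGraph (τ : ℝ) (p : ℝ × ℝ) : py (invGraph τ) p = -τ * p.1 := by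
  simp [py, (hasFDerivAt_invGraph τ p).fderiv]

section hypCylinder

variable {τ : ℝ}

lemma hypCylinder_pos (hτ : τ ≠ 0) (p : ℝ × ℝ) : 0 < hypCylinder τ p :=
  sqrt_pos.mpr (by positivity)

lemma sq_hypCylinder (hτ : τ ≠ 0) (p : ℝ × ℝ) :
    4 * τ ^ 2 * hypCylinder τ p ^ 2 = 1 + 4 * τ ^ 2 * p.1 ^ 2 := by
  rw [hypCylinder, sq_sqrt (by positivity)]
  field_simp

lemma px_hypCylinder (hτ : τ ≠ 0) :
    px (hypCylinder τ) = fun p => p.1 / hypCylinder τ p :=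
  funext fun p => px_comp_fst (hasDerivAt_sqrt_const_add_sq (by positivity) p.1)

lemma py_hypCylinder (hτ : τ ≠ 0) (p : ℝ × ℝ) : py (hypCylinder τ) p = 0 :=
  py_comp_fst (hasDerivAt_sqrt_const_add_sq (by positivity) p.1).differentiableAt

lemma px_px_hypCylinder (hτ : τ ≠ 0) (p : ℝ × ℝ) :
    px (px (hypCylinder τ)) p = 1 / (4 * τ ^ 2) / hypCylinder τ p ^ 3 := by
  rw [px_hypCylinder hτ]
  exact px_comp_fst (hasDerivAt_div_sqrt_const_add_sq (by positivity) p.1)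

lemma py_px_hypCylinder (hτ : τ ≠ 0) (p : ℝ × ℝ) : py (px (hypCylinder τ)) p = 0 := by
  rw [px_hypCylinder hτ]
  exact py_comp_fst (hasDerivAt_div_sqrt_const_add_sq (by positivity) p.1).differentiableAt

lemma py_py_hypCylinder (hτ : τ ≠ 0) (p : ℝ × ℝ) : py (py (hypCylinder τ)) p = 0 := by
  simp [funext (py_hypCylinder hτ), py]

lemma one_sub_sq_px_hypCylinder (hτ : τ ≠ 0) (p : ℝ × ℝ) :
    1 - px (hypCylinder τ) p ^ 2 = (1 / (2 * τ * hypCylinder τ p)) ^ 2 := by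
  have ha := (hypCylinder_pos hτ p).ne'
  rw [px_hypCylinder hτ]
  field_simp
  linear_combination sq_hypCylinder hτ p

lemma omegT_hypCylinder (hτ : 0 < τ) (p : ℝ × ℝ) :
    omegT (hypCylinder τ) p = 1 / (2 * τ * hypCylinder τ p) := by
  have ha := hypCylinder_pos hτ.ne' p
  rw [omegT, py_hypCylinder hτ.ne', sub_sub, zero_pow two_ne_zero, add_zero,
    one_sub_sq_px_hypCylinder hτ.ne', sqrt_sq (by positivity)]

end hypCylinder

/-- for `τ > 0`, the invariant minimal graph `u = −τxy` in
`Nil₃(τ)` and the hyperbolic cylinder `v = (1/(4τ²) + x²)^(1/2)` in `𝕃³` are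
dual graphs: `v` is spacelike, `u` and `v` satisfy the twin relations, and
consequently `v` satisfies the spacelike CMC-`τ` equation. -/
theorem invariant_graph_hyperbolic_cylinder_dual (τ : ℝ) (hτ : 0 < τ) :
    ∀ p : ℝ × ℝ,
      ((px (hypCylinder τ) p) ^ 2 + (py (hypCylinder τ) p) ^ 2 < 1) ∧
      (px (invGraph τ) p = py (hypCylinder τ) p / omegT (hypCylinder τ) p - τ * p.2) ∧
      (py (invGraph τ) p = -px (hypCylinder τ) p / omegT (hypCylinder τ) p + τ * p.1) ∧
      ((1 - (py (hypCylinder τ) p) ^ 2) * px (px (hypCylinder τ)) p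
          + 2 * px (hypCylinder τ) p * py (hypCylinder τ) p * py (px (hypCylinder τ)) p
          + (1 - (px (hypCylinder τ) p) ^ 2) * py (py (hypCylinder τ)) p
          = 2 * τ * (omegT (hypCylinder τ) p) ^ 3) := by
  intro p
  have hτ₀ := hτ.ne'
  have ha := (hypCylinder_pos hτ₀ p).ne'
  simp only [py_hypCylinder hτ₀, omegT_hypCylinder hτ p, px_invGraph, py_invGraph,
    px_px_hypCylinder hτ₀, py_px_hypCylinder hτ₀, py_py_hypCylinder hτ₀]
  refine ⟨?spacelike, by simp, ?twin, ?cmc⟩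
  case spacelike =>
    have := one_sub_sq_px_hypCylinder hτ₀ p
    have : 0 < (1 / (2 * τ * hypCylinder τ p)) ^ 2 := by positivity
    linarith
  case twin =>
    rw [px_hypCylinder hτ₀]
    field_simp
    ring
  case cmc =>
    field_simp
    ring
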